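/- Suppose R is noetherian in codimension 1, with witnessing depiction S, and set T := ⋂_{n ∈ U_{S/R}} S_n ⊆ Frac(R). Then every depiction S' of R is contained in T. -/

import Mathlib

/-! Common framework: depictions of nonnoetherian integral domains (Beil).
`K` plays the role of the fraction field `Frac R`; all rings are `k`-subalgebras of `K`. -/

section Depictions

variable {k K : Type*} [Field k] [Field K] [Algebra k K]

/-- The localization `A_p` of a subalgebra `A ⊆ K` at a prime ideal `p`,
viewed as a subalgebra of `K`. -/
def locAt (A : Subalgebra k K) (p : Ideal A) (hp : p.IsPrime) : Subalgebra k K where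
  carrier := {x : K | ∃ a s : A, s ∉ p ∧ x * (s : K) = (a : K)}
  one_mem' := ⟨1, 1, (Ideal.ne_top_iff_one p).mp hp.ne_top, by simp⟩
  zero_mem' := ⟨0, 1, (Ideal.ne_top_iff_one p).mp hp.ne_top, by simp⟩
  mul_mem' := by
    rintro x y ⟨a, s, hs, hx⟩ ⟨b, t, ht, hy⟩
    refine ⟨a * b, s * t, fun h => ((hp.mem_or_mem h).elim hs ht), ?_⟩
    have : x * y * ((s : K) * (t : K)) = (x * s) * (y * t) := by ring
    push_cast
    rw [this, hx, hy]
  add_mem' := by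
    rintro x y ⟨a, s, hs, hx⟩ ⟨b, t, ht, hy⟩
    refine ⟨a * t + b * s, s * t, fun h => ((hp.mem_or_mem h).elim hs ht), ?_⟩
    have : (x + y) * ((s : K) * (t : K)) = (x * s) * t + (y * t) * s := by ring
    push_cast
    rw [this, hx, hy]
  algebraMap_mem' := fun c =>
    ⟨algebraMap k A c, 1, (Ideal.ne_top_iff_one p).mp hp.ne_top, by simp⟩

lemma mem_locAt {A : Subalgebra k K} {p : Ideal A} {hp : p.IsPrime} {x : K} :
    x ∈ locAt A p hp ↔ ∃ a s : A, s ∉ p ∧ x * (s : K) = (a : K) := Iff.rfl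

/-- `n ∈ U_{S/R}`: `n` is a maximal ideal of `S` with `R_{n ∩ R} = S_n`. -/
def memU (R S : Subalgebra k K) (h : R ≤ S) (n : Ideal S) : Prop :=
  ∃ hn : n.IsMaximal,
    locAt R (n.comap (Subalgebra.inclusion h)) (hn.isPrime.comap _) = locAt S n hn.isPrime

/-- `q ∈ Z_{S/R}`: `q` is a prime of `S` whose zero locus meets `U_{S/R}`,
i.e. some `n ∈ U_{S/R}` contains `q`. -/
def memZ (R S : Subalgebra k K) (h : R ≤ S) (q : Ideal S) : Prop :=
  q.IsPrime ∧ ∃ n : Ideal S, memU R S h n ∧ q ≤ n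

/-- `S` is a depiction of `R`. -/
structure IsDepiction (R S : Subalgebra k K) : Prop where
  le : R ≤ S
  fg : S.FG
  specSurj : ∀ p : Ideal R, p.IsPrime →
    ∃ q : Ideal S, q.IsPrime ∧ q.comap (Subalgebra.inclusion le) = p
  memU_iff : ∀ (n : Ideal S) (hn : n.IsMaximal),
    memU R S le n ↔
      IsNoetherianRing (locAt R (n.comap (Subalgebra.inclusion le)) (hn.isPrime.comap _))
  nonempty : ∃ n : Ideal S, memU R S le n

/-- The height of an ideal `q`, as the Krull dimension of the set of primes contained in `q`. -/
noncomputable def htOf {A : Type*} [CommRing A] (q : Ideal A) : WithBot ℕ∞ :=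
  Order.krullDim {p : PrimeSpectrum A // p.asIdeal ≤ q}

/-- The geometric height of a prime `p` of `R`: the minimum of the heights `ht_S q` over all
depictions `S` of `R` and primes `q` of `S` with `q ∩ R = p`. -/
noncomputable def ght (R : Subalgebra k K) (p : Ideal R) : WithBot ℕ∞ :=
  sInf {h | ∃ (S : Subalgebra k K) (hd : IsDepiction R S) (q : Ideal S),
    q.IsPrime ∧ q.comap (Subalgebra.inclusion hd.le) = p ∧ h = htOf q}

/-- The geometric dimension of a prime `p` of `R`: `gdim p = dim R - ght p`. -/
noncomputable def gdim (R : Subalgebra k K) (p : Ideal R) : WithBot ℕ∞ :=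
  Option.map₂ (· - ·) (ringKrullDim ↥R) (ght R p)

/-- `T := ⋂_{n ∈ U_{S/R}} S_n`, as a subalgebra of `K`. -/
noncomputable def depT (R S : Subalgebra k K) (h : R ≤ S) : Subalgebra k K :=
  sInf {L | ∃ (n : Ideal S) (hn : n.IsMaximal), memU R S h n ∧ L = locAt S n hn.isPrime}

lemma le_depT (R S : Subalgebra k K) (h : R ≤ S) : S ≤ depT R S h := by
  refine le_sInf ?_
  rintro L ⟨n, hn, -, rfl⟩
  intro x hx
  exact ⟨⟨x, hx⟩, 1, (Ideal.ne_top_iff_one n).mp hn.ne_top, by simp⟩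

/-- A depiction `S` of `R` witnesses `noetherian in codimension 1`:
every height 1 prime of `S` lies in `Z_{S/R}`. -/
def Witnessing (R S : Subalgebra k K) (h : R ≤ S) : Prop :=
  ∀ q : Ideal S, q.IsPrime → htOf q = 1 → memZ R S h q

/-- `R` is noetherian in codimension 1. -/
def NoethCodimOne (R : Subalgebra k K) : Prop :=
  ∃ (S : Subalgebra k K) (hd : IsDepiction R S), Witnessing R S hd.le

/-- A depiction `S` of `R` is saturated if `ght (q ∩ R) = ht_S q` for every prime `q` of `S`
minimal over `(q ∩ R)S`. -/
def IsSaturated (R S : Subalgebra k K) (h : R ≤ S) : Prop :=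
  ∀ q : Ideal S,
    q ∈ (Ideal.map (Subalgebra.inclusion h) (q.comap (Subalgebra.inclusion h))).minimalPrimes →
      ght R (q.comap (Subalgebra.inclusion h)) = htOf q

/-- The subalgebra `k + p ⊆ K`, for `p` an ideal of a subalgebra `S ⊆ K`. -/
def kPlus (S : Subalgebra k K) (p : Ideal S) : Subalgebra k K where
  carrier := {x : K | ∃ (c : k) (f : S), f ∈ p ∧ x = algebraMap k K c + (f : K)}
  one_mem' := ⟨1, 0, p.zero_mem, by simp⟩
  zero_mem' := ⟨0, 0, p.zero_mem, by simp⟩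
  mul_mem' := by
    rintro x y ⟨c, f, hf, rfl⟩ ⟨d, g, hg, rfl⟩
    refine ⟨c * d, algebraMap k S c * g + algebraMap k S d * f + f * g,
      add_mem (add_mem (p.mul_mem_left _ hg) (p.mul_mem_left _ hf)) (p.mul_mem_left _ hg),
      ?_⟩
    push_cast
    ring
  add_mem' := by
    rintro x y ⟨c, f, hf, rfl⟩ ⟨d, g, hg, rfl⟩
    exact ⟨c + d, f + g, add_mem hf hg, by push_cast; ring⟩
  algebraMap_mem' := fun c => ⟨c, 0, p.zero_mem, by simp⟩

lemma kPlus_le (S : Subalgebra k K) (p : Ideal S) : kPlus S p ≤ S := by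
  rintro x ⟨c, f, hf, rfl⟩
  exact add_mem (S.algebraMap_mem c) f.2

end Depictions

/-! For `n ∈ U_{S/R}` the prime `p := n ∩ R` is maximal, since `R/p` embeds into `S/n`, which is
finite over `k` by Zariski's lemma; and `R_p = S_n` is noetherian. A depiction `S'` has a maximal
ideal `n'` lying over `p` (lift `p` to a prime and enlarge it), so `R_{n' ∩ R} = R_p` is noetherian
and `n' ∈ U_{S'/R}`. Hence `S' ⊆ S'_{n'} = R_p = S_n`. -/

section Localization

variable {k K : Type*} [Field k] [Field K] [Algebra k K]

lemma le_locAt (A : Subalgebra k K) (p : Ideal A) (hp : p.IsPrime) : A ≤ locAt A p hp :=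
  fun x hx => ⟨⟨x, hx⟩, 1, (Ideal.ne_top_iff_one p).mp hp.ne_top, by simp⟩

lemma locAt_congr {A : Subalgebra k K} {p q : Ideal A} (h : p = q) (hp : p.IsPrime)
    (hq : q.IsPrime) : locAt A p hp = locAt A q hq := by
  subst h; rfl

instance (A : Subalgebra k K) (p : Ideal A) (hp : p.IsPrime) : Algebra A (locAt A p hp) :=
  (Subalgebra.inclusion (le_locAt A p hp)).toAlgebra

lemma isLocalization_locAt (A : Subalgebra k K) (p : Ideal A) (hp : p.IsPrime) :
    IsLocalization p.primeCompl (locAt A p hp) where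
  map_units := by
    rintro ⟨s, hs⟩
    have hs0 : (s : K) ≠ 0 := fun h0 => hs (by simp [show s = 0 from Subtype.ext h0])
    refine isUnit_iff_exists_inv.mpr ⟨⟨(s : K)⁻¹, 1, s, hs, by simp [hs0]⟩, ?_⟩
    exact Subtype.ext (mul_inv_cancel₀ hs0)
  surj := by
    rintro ⟨z, a, s, hs, hz⟩
    exact ⟨(a, ⟨s, hs⟩), Subtype.ext hz⟩
  exists_of_eq := by
    intro a b hab
    have hK : (a : K) = b := congrArg (fun z : locAt A p hp => (z : K)) hab
    exact ⟨1, by rw [Subtype.ext hK]⟩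

lemma isNoetherianRing_locAt (A : Subalgebra k K) [IsNoetherianRing A] (p : Ideal A)
    (hp : p.IsPrime) : IsNoetherianRing (locAt A p hp) :=
  have := isLocalization_locAt A p hp
  IsLocalization.isNoetherianRing p.primeCompl _ ‹_›

end Localization

lemma Ideal.isMaximal_comap_of_finiteType {k A B : Type*} [Field k] [CommRing A] [CommRing B]
    [Algebra k A] [Algebra k B] [Algebra.FiniteType k B] (f : A →ₐ[k] B) (m : Ideal B)
    [m.IsMaximal] : (m.comap f).IsMaximal := by
  let := Ideal.Quotient.field m
  have : Algebra.FiniteType k (B ⧸ m) :=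
    .of_surjective (Ideal.Quotient.mkₐ k m) Ideal.Quotient.mk_surjective
  have : Module.Finite k (B ⧸ m) := finite_of_finite_type_of_isJacobsonRing k (B ⧸ m)
  have : Module.Finite k (A ⧸ m.comap f) :=
    .of_injective (Ideal.quotientMapₐ m f le_rfl).toLinearMap Ideal.quotientMap_injective
  have : IsArtinianRing (A ⧸ m.comap f) := .of_finite k _
  exact Ideal.Quotient.maximal_of_isField _ (IsArtinianRing.isField_of_isDomain _)

section Depiction

variable {k K : Type*} [Field k] [Field K] [Algebra k K] {R S : Subalgebra k K}

lemma isMaximal_comap_inclusion_of_fg (h : R ≤ S) (hfg : S.FG) {n : Ideal S}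
    (hn : n.IsMaximal) : (n.comap (Subalgebra.inclusion h)).IsMaximal :=
  have : Algebra.FiniteType k S := (Subalgebra.fg_iff_finiteType S).mp hfg
  Ideal.isMaximal_comap_of_finiteType (Subalgebra.inclusion h) n

lemma isNoetherianRing_locAt_comap_of_memU (h : R ≤ S) (hfg : S.FG) {n : Ideal S}
    (hn : memU R S h n) :
    IsNoetherianRing (locAt R (n.comap (Subalgebra.inclusion h)) (hn.1.isPrime.comap _)) := by
  have : Algebra.FiniteType k S := (Subalgebra.fg_iff_finiteType S).mp hfg
  have : IsNoetherianRing S := Algebra.FiniteType.isNoetherianRing k S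
  rw [hn.2]
  exact isNoetherianRing_locAt S n _

lemma IsDepiction.le_locAt_of_isMaximal (hS : IsDepiction R S) {p : Ideal R} (hp : p.IsMaximal)
    (hnoeth : IsNoetherianRing (locAt R p hp.isPrime)) : S ≤ locAt R p hp.isPrime := by
  obtain ⟨q, hq, hqp⟩ := hS.specSurj p hp.isPrime
  obtain ⟨n, hn, hqn⟩ := q.exists_le_maximal hq.ne_top
  have hnp : n.comap (Subalgebra.inclusion hS.le) = p :=
    (hp.eq_of_le (hn.isPrime.comap _).ne_top (hqp ▸ Ideal.comap_mono hqn)).symm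
  have hU : memU R S hS.le n := by
    rw [hS.memU_iff n hn, locAt_congr hnp _ hp.isPrime]
    exact hnoeth
  calc S ≤ locAt S n hn.isPrime := le_locAt S n _
    _ = locAt R (n.comap (Subalgebra.inclusion hS.le)) _ := hU.2.symm
    _ = locAt R p hp.isPrime := locAt_congr hnp _ _

end Depiction

theorem depiction_le_depT_general (k K : Type*) [Field k] [Field K] [Algebra k K]
    (R : Subalgebra k K)
    (S : Subalgebra k K) (hS : IsDepiction R S) :
    ∀ S' : Subalgebra k K, IsDepiction R S' → S' ≤ depT R S hS.le := by
  intro S' hS'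
  refine le_sInf ?_
  rintro L ⟨n, hn, hU, rfl⟩
  have hp := isMaximal_comap_inclusion_of_fg hS.le hS.fg hn
  calc S' ≤ locAt R (n.comap (Subalgebra.inclusion hS.le)) hp.isPrime :=
        hS'.le_locAt_of_isMaximal hp (isNoetherianRing_locAt_comap_of_memU hS.le hS.fg hU)
    _ = locAt S n hn.isPrime := hU.2

/-- If `R` is noetherian in codimension 1 with witnessing depiction `S` and
`T := ⋂_{n ∈ U_{S/R}} S_n`, then every depiction `S'` of `R` is contained in `T`. -/
theorem depiction_le_depT (k K : Type*) [Field k] [IsAlgClosed k] [Field K] [Algebra k K]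
    (R : Subalgebra k K) (hfrac : IsFractionRing ↥R K)
    (S : Subalgebra k K) (hS : IsDepiction R S) (hw : Witnessing R S hS.le) :
    ∀ S' : Subalgebra k K, IsDepiction R S' → S' ≤ depT R S hS.le :=
  depiction_le_depT_general k K R S hS
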